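/- arXiv:2109.10508 — 2 statements merged into one kernel-verified Lean document; each statement's English description precedes it below -/
import Mathlib

section
/- For a, m ≥ 2, there exists a primitive prime divisor of a^m - 1 except when (a, m) = (2, 6), or when m = 2 and a + 1 is a power of 2. -/
open Polynomial Finset

lemma zs_pow_ge (y : ℕ) (hy : 2 ≤ y) : ∀ r, 4 ≤ r → r * (y + 1) + 1 ≤ y ^ r := by
  refine Nat.le_induction ?_ ?_
  · have h3 : 2 ^ 3 ≤ y ^ 3 := Nat.pow_le_pow_left hy 3
    have h4 : y ^ 4 = y ^ 3 * y := by ring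
    nlinarith
  · intro n hn ih
    have h1 : y ^ (n + 1) = y ^ n * y := pow_succ y n
    have h2 : (n * (y + 1) + 1) * y ≤ y ^ n * y := Nat.mul_le_mul_right y ih
    have h3 : 4 ≤ y * y := Nat.mul_le_mul hy hy
    nlinarith

lemma zs_pow_ge' (y r : ℕ) (hy : 2 ≤ y) (hr : 3 ≤ r) (hex : ¬(y = 2 ∧ r = 3)) :
    r * (y + 1) + 1 ≤ y ^ r := by
  rcases Nat.lt_or_ge r 4 with h4 | h4
  · have hr3 : r = 3 := le_antisymm (by omega) hr
    subst hr3
    have hy3 : 3 ≤ y := by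
      rcases Nat.lt_or_ge y 3 with h | h
      · exact absurd ⟨by omega, rfl⟩ hex
      · exact h
    have : y ^ 3 = y * y * y := by ring
    nlinarith
  · exact zs_pow_ge y hy r h4

lemma zs_binom (c : ℤ) : ∀ i : ℕ, ∃ k : ℤ, (1 + c) ^ i = 1 + i * c + c ^ 2 * k := by
  intro i
  induction i with
  | zero => exact ⟨0, by simp⟩
  | succ n ih =>
    obtain ⟨k, hk⟩ := ih
    refine ⟨k + n + c * k, ?_⟩
    rw [pow_succ, hk]
    push_cast
    ring

lemma zs_geom_sum_not_dvd {r : ℕ} (hr : r.Prime) (hodd : r ≠ 2) {x : ℤ}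
    (hx : (r : ℤ) ∣ x - 1) : ¬ ((r : ℤ) ^ 2 ∣ ∑ i ∈ Finset.range r, x ^ i) := by
  intro hdvd
  have hx1 : x = 1 + (x - 1) := by ring
  set c : ℤ := x - 1 with hc
  choose k hk using zs_binom c
  have hs : ∑ i ∈ Finset.range r, x ^ i
      = (r : ℤ) + (∑ i ∈ Finset.range r, (i : ℤ)) * c + c ^ 2 * ∑ i ∈ Finset.range r, k i := by
    calc ∑ i ∈ Finset.range r, x ^ i = ∑ i ∈ Finset.range r, (1 + i * c + c ^ 2 * k i) := by
          refine Finset.sum_congr rfl fun i _ => ?_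
          rw [hx1]; exact hk i
      _ = _ := by
          rw [Finset.sum_add_distrib, Finset.sum_add_distrib, ← Finset.mul_sum,
            ← Finset.sum_mul]
          simp [mul_comm]
  -- r ∣ ∑ i
  have hT : (r : ℤ) ∣ ∑ i ∈ Finset.range r, (i : ℤ) := by
    obtain ⟨u, hu⟩ : 2 ∣ r - 1 := by
      obtain ⟨j, hj⟩ := hr.odd_of_ne_two hodd
      omega
    refine ⟨u, ?_⟩
    have h2 : (∑ i ∈ Finset.range r, i) * 2 = r * (r - 1) := Finset.sum_range_id_mul_two r
    have hr1 : 1 ≤ r := hr.one_lt.le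
    have h2' : (∑ i ∈ Finset.range r, (i : ℤ)) * 2 = (r : ℤ) * ((r : ℤ) - 1) := by
      have := congrArg (Nat.cast : ℕ → ℤ) h2
      push_cast [Nat.cast_sub hr1] at this
      linarith
    have hru : ((r : ℤ) - 1) = 2 * u := by
      have := congrArg (Nat.cast : ℕ → ℤ) hu
      push_cast [Nat.cast_sub hr1] at this
      linarith
    have : (∑ i ∈ Finset.range r, (i : ℤ)) * 2 = (r : ℤ) * u * 2 := by
      rw [h2', hru]; ring
    linarith
  obtain ⟨u, hu⟩ := hT
  have hc' : (r : ℤ) ∣ c := hx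
  obtain ⟨d, hd⟩ := hc'
  have : (r : ℤ) ^ 2 ∣ (r : ℤ) := by
    have h1 : (r : ℤ) ^ 2 ∣ (∑ i ∈ Finset.range r, (i : ℤ)) * c := ⟨u * d, by rw [hu, hd]; ring⟩
    have h2 : (r : ℤ) ^ 2 ∣ c ^ 2 * ∑ i ∈ Finset.range r, k i := ⟨d ^ 2 * ∑ i ∈ Finset.range r, k i, by rw [hd]; ring⟩
    have := dvd_sub (dvd_sub hdvd h2) h1
    rw [hs] at this
    simpa using this
  have hle := Int.le_of_dvd (by exact_mod_cast hr.pos) this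
  have : (r : ℤ) * 1 < (r:ℤ) * (r:ℤ) := by
    have : (1:ℤ) < r := by exact_mod_cast hr.one_lt
    exact mul_lt_mul_of_pos_left this (by linarith)
  nlinarith
open Polynomial

lemma zs_struct {q m a : ℕ} (hq : q.Prime) (hm : 0 < m) (hqa : ¬ q ∣ a)
    (hdvd : (q : ℤ) ∣ (Polynomial.cyclotomic m ℤ).eval (a : ℤ)) :
    IsPrimitiveRoot (a : ZMod q) (m / q ^ m.factorization q) ∧
      (m / q ^ m.factorization q) ∣ q - 1 := by
  haveI : Fact q.Prime := ⟨hq⟩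
  set s := m.factorization q with hs
  set t := m / q ^ s with ht
  have hms : q ^ s * t = m := Nat.ordProj_mul_ordCompl_eq_self m q
  have hqt : ¬ q ∣ t := Nat.not_dvd_ordCompl hq hm.ne'
  haveI : NeZero (t : ZMod q) := ⟨fun h => hqt ((ZMod.natCast_eq_zero_iff t q).mp h)⟩
  have hroot : (cyclotomic m (ZMod q)).IsRoot (a : ZMod q) := by
    rw [IsRoot.def, ← map_cyclotomic_int m (ZMod q)]
    have h1 := Polynomial.eval_intCast_map (Int.castRingHom (ZMod q)) (cyclotomic m ℤ) (a : ℤ)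
    rw [show ((a : ZMod q)) = (((a : ℤ) : ZMod q)) by push_cast; rfl, h1]
    exact_mod_cast (ZMod.intCast_zmod_eq_zero_iff_dvd _ q).mpr hdvd
  have hprim : IsPrimitiveRoot (a : ZMod q) t := by
    rw [← hms] at hroot
    exact (Polynomial.isRoot_cyclotomic_prime_pow_mul_iff_of_charP).mp hroot
  have hane : (a : ZMod q) ≠ 0 := fun h => hqa ((ZMod.natCast_eq_zero_iff a q).mp h)
  exact ⟨hprim, hprim.dvd_of_pow_eq_one _ (ZMod.pow_card_sub_one_eq_one hane)⟩

lemma zs_expand {r : ℕ} (t : ℕ) (hr : r.Prime) :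
    ∀ (j : ℕ) (x : ℤ), (Polynomial.cyclotomic (t * r ^ (j + 1)) ℤ).eval x
      = (Polynomial.cyclotomic (t * r) ℤ).eval (x ^ r ^ j) := by
  intro j
  induction j with
  | zero => intro x; simp
  | succ n ih =>
    intro x
    have hdvd : r ∣ t * r ^ (n + 1) := Dvd.dvd.mul_left (dvd_pow_self r (Nat.succ_ne_zero n)) t
    have h1 := Polynomial.cyclotomic_expand_eq_cyclotomic hr hdvd ℤ
    have h2 : t * r ^ (n + 1) * r = t * r ^ (n + 2) := by ring
    calc (cyclotomic (t * r ^ (n + 2)) ℤ).eval x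
        = (expand ℤ r (cyclotomic (t * r ^ (n + 1)) ℤ)).eval x := by rw [h1, h2]
      _ = (cyclotomic (t * r ^ (n + 1)) ℤ).eval (x ^ r) := Polynomial.expand_eval r _ x
      _ = (cyclotomic (t * r) ℤ).eval ((x ^ r) ^ r ^ n) := ih (x ^ r)
      _ = (cyclotomic (t * r) ℤ).eval (x ^ r ^ (n + 1)) := by
          rw [← pow_mul, ← pow_succ']

/-- Zsigmondy's theorem: for `a, m ≥ 2` there exists a primitive prime divisor of
`a^m - 1`, except when `(a, m) = (2, 6)` or `m = 2` and `a + 1` is a power of `2`. -/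
theorem zsigmondy (a m : ℕ) (ha : 2 ≤ a) (hm : 2 ≤ m)
    (h1 : ¬(a = 2 ∧ m = 6)) (h2 : ¬(m = 2 ∧ ∃ k : ℕ, a + 1 = 2 ^ k)) :
    ∃ r : ℕ, r.Prime ∧ r ∣ a ^ m - 1 ∧ ∀ i, 1 ≤ i → i < m → ¬ r ∣ a ^ i - 1 := by
  by_contra hcon
  push_neg at hcon
  -- hcon : ∀ r, r.Prime → r ∣ a ^ m - 1 → ∃ i, 1 ≤ i ∧ i < m ∧ r ∣ a ^ i - 1
  -- First dispose of the case m = 2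
  rcases eq_or_lt_of_le hm with hm2 | hm3
  · -- m = 2
    subst hm2
    have hN : a + 1 ≠ 0 := by omega
    have hsq : a ^ 2 - 1 = (a - 1) * (a + 1) := by
      rcases Nat.exists_eq_add_of_le ha with ⟨c, rfl⟩
      have h : (2 + c) ^ 2 = c * c + 4 * c + 4 := by ring
      have h' : (2 + c - 1) * (2 + c + 1) = c * c + 4 * c + 3 := by
        have : 2 + c - 1 = c + 1 := by omega
        rw [this]; ring
      omega
    have hall : ∀ {d : ℕ}, d.Prime → d ∣ a + 1 → d = 2 := by
      intro d hd hdN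
      have hdA : d ∣ a ^ 2 - 1 := by rw [hsq]; exact Dvd.dvd.mul_left hdN _
      obtain ⟨i, hi1, hi2, hdvd⟩ := hcon d hd hdA
      have hi : i = 1 := by omega
      subst hi
      rw [pow_one] at hdvd
      have h2' : d ∣ (a + 1) - (a - 1) := Nat.dvd_sub hdN hdvd
      have : (a + 1) - (a - 1) = 2 := by omega
      rw [this] at h2'
      exact (Nat.prime_dvd_prime_iff_eq hd Nat.prime_two).mp h2'
    exact h2 ⟨rfl, _, Nat.eq_prime_pow_of_unique_prime_dvd hN hall⟩
  -- Now m ≥ 3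
  have hm0 : 0 < m := by omega
  set Φℤ : ℤ := (Polynomial.cyclotomic m ℤ).eval (a : ℤ) with hΦdef
  have hΦpos : 0 < Φℤ := Polynomial.cyclotomic_pos' m (by exact_mod_cast ha)
  set Φ : ℕ := Φℤ.toNat with hΦnat
  have hΦcast : (Φ : ℤ) = Φℤ := Int.toNat_of_nonneg hΦpos.le
  have hΦabs : Φℤ.natAbs = Φ := by omega
  have hΦgt : a - 1 < Φ := by
    have := Polynomial.sub_one_lt_natAbs_cyclotomic_eval (show 1 < m by omega)
      (show a ≠ 1 by omega)
    rwa [hΦabs] at this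
  have hΦ2 : 2 ≤ Φ := by omega
  have hA1 : 1 ≤ a ^ m := Nat.one_le_pow _ _ (by omega)
  have hAcast : ((a ^ m - 1 : ℕ) : ℤ) = (a : ℤ) ^ m - 1 := by
    rw [Nat.cast_sub hA1]; push_cast; ring
  have hΦdvdA : Φ ∣ a ^ m - 1 := by
    have hd : Φℤ ∣ (a : ℤ) ^ m - 1 := by
      have h := Polynomial.eval_dvd (x := (a : ℤ))
        (Polynomial.cyclotomic.dvd_X_pow_sub_one m ℤ)
      simpa using h
    rw [← hΦcast, ← hAcast] at hd
    exact_mod_cast hd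
  -- no prime divisor of Φ divides a
  have hnota : ∀ q : ℕ, q.Prime → q ∣ Φ → ¬ q ∣ a := by
    intro q hq hqΦ hqa
    have hq1 : q ∣ a ^ m - 1 := hqΦ.trans hΦdvdA
    have hq2 : q ∣ a ^ m := hqa.trans (dvd_pow_self a (by omega))
    have hq3 : q ∣ a ^ m - (a ^ m - 1) := Nat.dvd_sub hq2 hq1
    have : a ^ m - (a ^ m - 1) = 1 := by omega
    rw [this] at hq3
    have := Nat.le_of_dvd one_pos hq3
    have := hq.two_le
    omega
  -- every prime divisor of Φ divides m
  have hdvdm : ∀ q : ℕ, q.Prime → q ∣ Φ → q ∣ m := by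
    intro q hq hqΦ
    by_contra hqm
    haveI : Fact q.Prime := ⟨hq⟩
    haveI : NeZero ((m : ℕ) : ZMod q) :=
      ⟨fun h => hqm ((ZMod.natCast_eq_zero_iff m q).mp h)⟩
    have hroot : (cyclotomic m (ZMod q)).IsRoot (a : ZMod q) := by
      rw [IsRoot.def, ← map_cyclotomic_int m (ZMod q)]
      have h1 := Polynomial.eval_intCast_map (Int.castRingHom (ZMod q))
        (cyclotomic m ℤ) (a : ℤ)
      rw [show ((a : ZMod q)) = (((a : ℤ) : ZMod q)) by push_cast; rfl, h1]
      have : (q : ℤ) ∣ Φℤ := by rw [← hΦcast]; exact_mod_cast hqΦ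
      exact_mod_cast (ZMod.intCast_zmod_eq_zero_iff_dvd _ q).mpr this
    have hprim : IsPrimitiveRoot (a : ZMod q) m := Polynomial.isRoot_cyclotomic_iff.mp hroot
    obtain ⟨i, hi1, him, hdvd⟩ := hcon q hq (hqΦ.trans hΦdvdA)
    have hai : 1 ≤ a ^ i := Nat.one_le_pow _ _ (by omega)
    have hpow : (a : ZMod q) ^ i = 1 := by
      have hz : ((a ^ i - 1 : ℕ) : ZMod q) = 0 := (ZMod.natCast_eq_zero_iff _ _).mpr hdvd
      rw [Nat.cast_sub hai] at hz
      push_cast at hz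
      rwa [sub_eq_zero] at hz
    have := Nat.le_of_dvd (by omega) (hprim.dvd_of_pow_eq_one i hpow)
    omega
  -- pick the prime r dividing Φ
  obtain ⟨r, hr, hrΦ⟩ := Nat.exists_prime_and_dvd (show Φ ≠ 1 by omega)
  haveI : Fact r.Prime := ⟨hr⟩
  have hrm : r ∣ m := hdvdm r hr hrΦ
  have hra : ¬ r ∣ a := hnota r hr hrΦ
  have hrΦℤ : (r : ℤ) ∣ Φℤ := by rw [← hΦcast]; exact_mod_cast hrΦ
  obtain ⟨hprim, htdvd⟩ := zs_struct hr hm0 hra hrΦℤ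
  set s := m.factorization r with hs
  set t := m / r ^ s with ht
  have hms : r ^ s * t = m := Nat.ordProj_mul_ordCompl_eq_self m r
  have hrt : ¬ r ∣ t := Nat.not_dvd_ordCompl hr hm0.ne'
  have ht0 : 0 < t := Nat.ordCompl_pos r hm0.ne'
  have hs1 : 1 ≤ s := hr.factorization_pos_of_dvd hm0.ne' hrm
  obtain ⟨s', hs'⟩ : ∃ s', s = s' + 1 := ⟨s - 1, by omega⟩
  -- any other prime divisor of m is < r
  have hqlt : ∀ p : ℕ, p.Prime → p ∣ m → p ≠ r → p < r := by
    intro p hp hpm hne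
    have hpt : p ∣ t := by
      have h : p ∣ r ^ s * t := by rw [hms]; exact hpm
      rcases hp.dvd_mul.mp h with h' | h'
      · exact absurd ((Nat.prime_dvd_prime_iff_eq hp hr).mp (hp.dvd_of_dvd_pow h')) hne
      · exact h'
    have h1 : p ≤ t := Nat.le_of_dvd ht0 hpt
    have h2 : t ≤ r - 1 := Nat.le_of_dvd (by have := hr.two_le; omega) htdvd
    omega
  -- Φ is a power of r
  have hunique : ∀ {d : ℕ}, d.Prime → d ∣ Φ → d = r := by
    intro d hd hdΦ
    by_contra hne
    have hdm := hdvdm d hd hdΦ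
    have h1 := hqlt d hd hdm hne
    have hda : ¬ d ∣ a := hnota d hd hdΦ
    have hdΦℤ : (d : ℤ) ∣ Φℤ := by rw [← hΦcast]; exact_mod_cast hdΦ
    obtain ⟨_, htdvd'⟩ := zs_struct hd hm0 hda hdΦℤ
    haveI : Fact d.Prime := ⟨hd⟩
    have h2 : r ≠ d := fun h => hne h.symm
    have h3 : r < d := by
      -- symmetric argument with roles of r and d exchanged
      have hrt' : r ∣ m / d ^ m.factorization d ∨ r ∣ d ^ m.factorization d := by
        have hmd : d ^ m.factorization d * (m / d ^ m.factorization d) = m :=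
          Nat.ordProj_mul_ordCompl_eq_self m d
        have h : r ∣ d ^ m.factorization d * (m / d ^ m.factorization d) := by
          rw [hmd]; exact hrm
        rcases hr.dvd_mul.mp h with h' | h'
        · exact Or.inr h'
        · exact Or.inl h'
      rcases hrt' with h' | h'
      · have ha1 : r ≤ m / d ^ m.factorization d :=
          Nat.le_of_dvd (Nat.ordCompl_pos d hm0.ne') h'
        have ha2 : m / d ^ m.factorization d ≤ d - 1 :=
          Nat.le_of_dvd (by have := hd.two_le; omega) htdvd'
        omega
      · exact absurd ((Nat.prime_dvd_prime_iff_eq hr hd).mp (hr.dvd_of_dvd_pow h')) h2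
    omega
  have hΦpow : Φ = r ^ Φ.primeFactorsList.length :=
    Nat.eq_prime_pow_of_unique_prime_dvd (by omega) hunique
  set e := Φ.primeFactorsList.length with he
  have he1 : 1 ≤ e := by
    by_contra h
    have : e = 0 := by omega
    rw [this, pow_zero] at hΦpow
    omega
  -- the key divisibility: (a^(m/r) - 1) * Φ ∣ a^m - 1
  have hmrdvd : m / r ∣ m := Nat.div_dvd_of_dvd hrm
  have hmrlt : m / r < m := Nat.div_lt_self hm0 hr.one_lt
  have hmr1 : 1 ≤ m / r := by
    have := Nat.div_pos (Nat.le_of_dvd hm0 hrm) hr.pos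
    omega
  set x := a ^ (m / r) with hx
  have hx2 : 2 ≤ x := by
    calc 2 = 2 ^ 1 := rfl
    _ ≤ a ^ (m / r) := Nat.pow_le_pow_left ha (m / r) |>.trans' (Nat.pow_le_pow_right (by omega) hmr1)
  have hxm : x ^ r = a ^ m := by
    rw [hx, ← pow_mul, Nat.div_mul_cancel hrm]
  have hkey : (x - 1) * Φ ∣ a ^ m - 1 := by
    have hpoly := Polynomial.X_pow_sub_one_mul_cyclotomic_dvd_X_pow_sub_one_of_dvd ℤ
      (Nat.mem_properDivisors.mpr ⟨hmrdvd, hmrlt⟩)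
    have heval := Polynomial.eval_dvd (x := (a : ℤ)) hpoly
    simp only [Polynomial.eval_mul, Polynomial.eval_sub, Polynomial.eval_pow,
      Polynomial.eval_X, Polynomial.eval_one] at heval
    have hc1 : ((x - 1 : ℕ) : ℤ) = (a : ℤ) ^ (m / r) - 1 := by
      rw [Nat.cast_sub (by omega : 1 ≤ x)]; push_cast [hx]; ring
    have : (((x - 1) * Φ : ℕ) : ℤ) ∣ ((a ^ m - 1 : ℕ) : ℤ) := by
      rw [hAcast, Nat.cast_mul, hc1, hΦcast]
      exact heval
    exact_mod_cast this
  -- t divides m / r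
  have hmreq : m / r = r ^ s' * t := by
    have : m = r * (r ^ s' * t) := by rw [← hms, hs', pow_succ]; ring
    rw [this, Nat.mul_div_cancel_left _ hr.pos]
  have htmr : t ∣ m / r := by rw [hmreq]; exact Dvd.intro_left _ rfl
  -- r ∣ x - 1
  have hxmod : (r : ℤ) ∣ (x : ℤ) - 1 := by
    rw [← ZMod.intCast_zmod_eq_zero_iff_dvd]
    push_cast
    obtain ⟨c, hc⟩ := htmr
    have : (a : ZMod r) ^ (m / r) = 1 := by
      rw [hc, pow_mul, hprim.pow_eq_one, one_pow]
    rw [hx]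
    push_cast
    rw [this]
    ring
  rcases Nat.lt_or_ge r 3 with hr2 | hr3
  · -- r = 2 : then t = 1 and m = 2^s, leads to contradiction
    have hr2' : r = 2 := by have := hr.two_le; omega
    subst hr2'
    have ht1 : t = 1 := by
      have := Nat.le_of_dvd (by omega) htdvd
      omega
    have hmpow : m = 2 ^ s := by rw [← hms, ht1, mul_one]
    have hs2 : 2 ≤ s := by
      rcases Nat.lt_or_ge s 2 with h | h
      · interval_cases s <;> omega
      · exact h
    have ha3 : 3 ≤ a := by
      rcases Nat.lt_or_ge a 3 with h | h
      · have : a = 2 := by omega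
        exact absurd (this ▸ hra) (by simp)
      · exact h
    have haodd : ¬ 2 ∣ a := hra
    -- x = a^(m/2) is an odd square, so x % 4 = 1
    have hmr2 : m / 2 = 2 ^ (s - 2) * 2 := by
      have h2s : (2:ℕ) ^ s = (2 ^ (s - 2) * 2) * 2 := by
        obtain ⟨u, hu⟩ : ∃ u, s = u + 2 := ⟨s - 2, by omega⟩
        rw [hu, Nat.add_sub_cancel, pow_add]; ring
      rw [hmpow, h2s, Nat.mul_div_cancel _ (by norm_num)]
    have hxsq : x = (a ^ 2 ^ (s - 2)) ^ 2 := by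
      rw [hx, hmr2, pow_mul]
    have hbodd : ¬ 2 ∣ a ^ 2 ^ (s - 2) := fun h => haodd (Nat.Prime.dvd_of_dvd_pow Nat.prime_two h)
    have hxm4 : x % 4 = 1 := by
      obtain ⟨k, hk⟩ : ∃ k, a ^ 2 ^ (s - 2) = 2 * k + 1 := by
        rcases Nat.even_or_odd (a ^ 2 ^ (s - 2)) with h | h
        · exact absurd h.two_dvd hbodd
        · obtain ⟨k, hk⟩ := h; exact ⟨k, hk⟩
      rw [hxsq, hk]
      have : (2 * k + 1) ^ 2 = 4 * (k * k + k) + 1 := by ring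
      omega
    -- Φ divides x + 1
    have hfact : a ^ m - 1 = (x - 1) * (x + 1) := by
      obtain ⟨c, hc⟩ := Nat.exists_eq_add_of_le hx2
      have h : (x - 1) * (x + 1) + 1 = x ^ 2 := by
        rw [hc]
        have h1 : 2 + c - 1 = c + 1 := by omega
        rw [h1]
        ring
      have hx2' : x ^ 2 = a ^ m := by rw [← hxm]
      omega
    have hΦx1 : Φ ∣ x + 1 := by
      have h := hkey
      rw [hfact] at h
      exact (Nat.mul_dvd_mul_iff_left (by omega : 0 < x - 1)).mp h
    -- Φ = 2^e with e ≥ 2 since Φ ≥ 3, contradiction with x + 1 ≡ 2 mod 4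
    have hΦ3 : 3 ≤ Φ := by omega
    have he2 : 2 ≤ e := by
      by_contra h
      have : e = 1 := by omega
      rw [this, pow_one] at hΦpow
      omega
    have h4 : 4 ∣ Φ := by
      rw [hΦpow]
      exact pow_dvd_pow 2 he2 |>.trans (dvd_refl _) |>.trans (by rw [← hΦpow]) |>.trans dvd_rfl
    have h4' : 4 ∣ x + 1 := h4.trans hΦx1
    omega
  · -- r odd
    -- first show e = 1, i.e. Φ = r
    have hSfact : a ^ m - 1 = (x - 1) * ∑ i ∈ Finset.range r, x ^ i := by
      have hgeo : ((∑ i ∈ Finset.range r, (x : ℤ) ^ i)) * ((x : ℤ) - 1) = (x : ℤ) ^ r - 1 :=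
        geom_sum_mul (x : ℤ) r
      have hc : (((x - 1) * ∑ i ∈ Finset.range r, x ^ i : ℕ) : ℤ) = ((a ^ m - 1 : ℕ) : ℤ) := by
        rw [hAcast]
        have hxmz : ((x : ℕ) : ℤ) ^ r = ((a : ℕ) : ℤ) ^ m := by exact_mod_cast hxm
        push_cast [Nat.cast_sub (by omega : 1 ≤ x)]
        rw [mul_comm, hgeo, hxmz]
      exact_mod_cast hc.symm
    have hΦS : Φ ∣ ∑ i ∈ Finset.range r, x ^ i := by
      have h := hkey
      rw [hSfact] at h
      exact (Nat.mul_dvd_mul_iff_left (by omega : 0 < x - 1)).mp h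
    have he'' : e = 1 := by
      by_contra hne
      have he2 : 2 ≤ e := by omega
      have hr2dvd : r ^ 2 ∣ Φ := hΦpow ▸ pow_dvd_pow r he2
      have hr2S : (r : ℤ) ^ 2 ∣ ∑ i ∈ Finset.range r, (x : ℤ) ^ i := by
        have h := hr2dvd.trans hΦS
        have hcastS : ((∑ i ∈ Finset.range r, x ^ i : ℕ) : ℤ) = ∑ i ∈ Finset.range r, (x : ℤ) ^ i := by
          push_cast; ring
        have : ((r ^ 2 : ℕ) : ℤ) ∣ ((∑ i ∈ Finset.range r, x ^ i : ℕ) : ℤ) := by exact_mod_cast h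
        rw [hcastS] at this
        exact_mod_cast this
      exact zs_geom_sum_not_dvd hr (by omega) hxmod hr2S
    have hΦr : Φ = r := by rw [hΦpow, he'', pow_one]
    -- now the size contradiction
    rcases Nat.lt_or_ge a 3 with ha2 | ha3
    · -- a = 2 : use the expand identity
      have ha2' : a = 2 := by omega
      subst ha2'
      have ht2 : 2 ≤ t := by
        rcases Nat.lt_or_ge t 2 with h | h
        · have ht1 : t = 1 := by omega
          rw [ht1] at hprim
          have h21 : ((2 : ℕ) : ZMod r) = 1 := by
            have := hprim.pow_eq_one
            rwa [pow_one] at this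
          have hz : ((1 : ℕ) : ZMod r) = 0 := by
            calc ((1 : ℕ) : ZMod r) = ((2 : ℕ) : ZMod r) - 1 := by push_cast; ring
            _ = 0 := by rw [h21]; ring
          have := (ZMod.natCast_eq_zero_iff 1 r).mp hz
          have := Nat.le_of_dvd one_pos this
          have := hr.two_le
          omega
        · exact h
      -- exception (2, 6)
      set y : ℕ := 2 ^ r ^ s' with hy
      have hy2 : 2 ≤ y := by
        rw [hy]
        calc (2:ℕ) = 2 ^ 1 := rfl
        _ ≤ 2 ^ r ^ s' := Nat.pow_le_pow_right (by omega) (Nat.one_le_pow _ _ hr.pos)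
      have hex : ¬ (y = 2 ∧ r = 3) := by
        rintro ⟨hy2', hr3'⟩
        -- y = 2 forces s' = 0, r = 3 forces t = 2, so m = 6
        have hrs1 : r ^ s' = 1 := by
          have h2p : (2:ℕ) ^ r ^ s' = 2 ^ 1 := by rw [pow_one, ← hy]; exact hy2'
          exact Nat.pow_right_injective (le_refl 2) h2p
        have hs'0 : s' = 0 := by
          rcases Nat.eq_zero_or_pos s' with h | h
          · exact h
          · exfalso
            have := Nat.one_lt_pow (show s' ≠ 0 by omega) hr.one_lt
            omega
        have ht2' : t = 2 := by
          have := Nat.le_of_dvd (by have := hr.two_le; omega) htdvd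
          rw [hr3'] at this
          omega
        have hm6 : m = 6 := by
          rw [← hms, hs', hs'0, hr3', ht2']
          norm_num
        exact h1 ⟨rfl, hm6⟩
      have hineq : r * (y + 1) + 1 ≤ y ^ r := zs_pow_ge' y r hy2 hr3 hex
      -- Φℤ = Φ_{tr}(y)
      have hΦy : Φℤ = (Polynomial.cyclotomic (t * r) ℤ).eval ((y : ℤ)) := by
        have hmm : m = t * r ^ (s' + 1) := by rw [← hms, hs']; ring
        have := zs_expand t hr s' (2 : ℤ)
        rw [hΦdef, hmm]
        rw [show ((2:ℕ) : ℤ) = (2 : ℤ) by norm_num, this]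
        congr 1
      -- key equation : Φ_t(y^r) = Φℤ * Φ_t(y)
      have hexp := Polynomial.cyclotomic_expand_eq_cyclotomic_mul hr hrt ℤ
      have heq : (Polynomial.cyclotomic t ℤ).eval ((y : ℤ) ^ r)
          = Φℤ * (Polynomial.cyclotomic t ℤ).eval (y : ℤ) := by
        have h := congrArg (Polynomial.eval ((y : ℤ))) hexp
        rw [Polynomial.expand_eval, Polynomial.eval_mul, ← hΦy] at h
        exact h
      -- move to ℝ
      have hcastR : ∀ (n : ℕ) (z : ℤ),
          (Polynomial.cyclotomic n ℝ).eval ((z : ℝ)) = (((Polynomial.cyclotomic n ℤ).eval z : ℤ) : ℝ) := by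
        intro n z
        have := Polynomial.cyclotomic.eval_apply (R := ℤ) (S := ℝ) z n (Int.castRingHom ℝ)
        simpa using this
      set Y : ℝ := ((y : ℕ) : ℝ) with hY
      have hY1 : (1 : ℝ) < Y := by
        rw [hY]; exact_mod_cast (by omega : 1 < y)
      have hYr1 : (1 : ℝ) < Y ^ r := one_lt_pow₀ hY1 (by omega)
      have heqR : (Polynomial.cyclotomic t ℝ).eval (Y ^ r)
          = (r : ℝ) * (Polynomial.cyclotomic t ℝ).eval Y := by
        have h1 := hcastR t ((y : ℤ) ^ r)
        have h2 := hcastR t (y : ℤ)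
        have h3 : (((y : ℤ) ^ r : ℤ) : ℝ) = Y ^ r := by push_cast [hY]; ring
        have h4 : (((y : ℤ) : ℤ) : ℝ) = Y := by push_cast [hY]; ring
        rw [h3] at h1
        rw [h4] at h2
        rw [h1, h2, heq]
        push_cast [← hΦcast, hΦr]
        ring
      have hL1 : (Y ^ r - 1) ^ t.totient < (Polynomial.cyclotomic t ℝ).eval (Y ^ r) :=
        Polynomial.sub_one_pow_totient_lt_cyclotomic_eval ht2 hYr1
      have hL2 : (Polynomial.cyclotomic t ℝ).eval Y ≤ (Y + 1) ^ t.totient :=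
        Polynomial.cyclotomic_eval_le_add_one_pow_totient hY1 t
      have hφt : 1 ≤ t.totient := Nat.totient_pos.mpr (by omega)
      have hineqR : (r : ℝ) * (Y + 1) ≤ Y ^ r - 1 := by
        have : ((r * (y + 1) + 1 : ℕ) : ℝ) ≤ ((y ^ r : ℕ) : ℝ) := by exact_mod_cast hineq
        push_cast at this
        rw [hY]
        push_cast
        linarith
      have hL3 : (r : ℝ) * (Y + 1) ^ t.totient ≤ (Y ^ r - 1) ^ t.totient := by
        have h0 : (0 : ℝ) ≤ (r : ℝ) * (Y + 1) := by positivity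
        have h1' : ((r : ℝ) * (Y + 1)) ^ t.totient ≤ (Y ^ r - 1) ^ t.totient :=
          pow_le_pow_left₀ h0 hineqR t.totient
        have h2' : (r : ℝ) * (Y + 1) ^ t.totient ≤ ((r : ℝ) * (Y + 1)) ^ t.totient := by
          rw [mul_pow]
          have : (r : ℝ) ≤ (r : ℝ) ^ t.totient :=
            le_self_pow₀ (by exact_mod_cast hr.pos) (by omega)
          have hp : (0:ℝ) < (Y + 1) ^ t.totient := by positivity
          nlinarith
        linarith
      have hrpos : (0 : ℝ) < (r : ℝ) := by exact_mod_cast hr.pos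
      have hfinal : (r : ℝ) * (Polynomial.cyclotomic t ℝ).eval Y
          < (r : ℝ) * (Polynomial.cyclotomic t ℝ).eval Y := by
        calc (r : ℝ) * (Polynomial.cyclotomic t ℝ).eval Y
            ≤ (r : ℝ) * (Y + 1) ^ t.totient := by nlinarith
          _ ≤ (Y ^ r - 1) ^ t.totient := hL3
          _ < (Polynomial.cyclotomic t ℝ).eval (Y ^ r) := hL1
          _ = (r : ℝ) * (Polynomial.cyclotomic t ℝ).eval Y := heqR
      exact absurd hfinal (lt_irrefl _)
    · -- a ≥ 3 : size contradiction over ℕ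
      have hc1 : r - 1 ∣ m.totient := by
        have := Nat.totient_dvd_of_dvd hrm
        rwa [Nat.totient_prime hr] at this
      have hc2 : r - 1 ≤ m.totient := Nat.le_of_dvd (Nat.totient_pos.mpr hm0) hc1
      have hc3 : m.totient < 2 ^ m.totient := Nat.lt_two_pow_self
      have hc4 : 2 ^ m.totient ≤ (a - 1) ^ m.totient := Nat.pow_le_pow_left (by omega) _
      have hc5 : (a - 1) ^ m.totient < Φ := by
        have := Polynomial.sub_one_pow_totient_lt_natAbs_cyclotomic_eval
          (show 1 < m by omega) (show a ≠ 1 by omega)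
        rwa [hΦabs] at this
      have : r < Φ := by
        have h := hr.two_le
        calc r ≤ m.totient + 1 := by omega
        _ ≤ 2 ^ m.totient := hc3
        _ ≤ (a - 1) ^ m.totient := hc4
        _ < Φ := hc5
      omega
end

section
/- The group PSL(2,8) has no proper subgroup whose order is divisible by each of 2, 3 and 7. -/
/-! # `PSL(2,8)` has no proper subgroup of order divisible by `42` -/

/-- The field with 8 elements: `Fin 8` with GF(8) arithmetic (modulus `x³+x+1`). -/
def F8 := Fin 8

instance : DecidableEq F8 := instDecidableEqFin 8
instance : Fintype F8 := Fin.fintype 8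

namespace F8

def mulT : Nat := 2821848294356612419217921029917578219971947684264937521152
def invT : Nat := 9272648

instance : Zero F8 := ⟨⟨0, by norm_num⟩⟩
instance : One F8 := ⟨⟨1, by norm_num⟩⟩
instance : Add F8 := ⟨fun a b => ⟨(a.val ^^^ b.val) &&& 7, Nat.lt_succ_of_le Nat.and_le_right⟩⟩
instance : Mul F8 :=
  ⟨fun a b => ⟨(mulT >>> (3 * (8 * a.val + b.val))) &&& 7, Nat.lt_succ_of_le Nat.and_le_right⟩⟩
instance : Neg F8 := ⟨id⟩
instance : Inv F8 := ⟨fun a => ⟨(invT >>> (3 * a.val)) &&& 7, Nat.lt_succ_of_le Nat.and_le_right⟩⟩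

instance : CommRing F8 where
  add_assoc := by decide
  zero_add := by decide
  add_zero := by decide
  add_comm := by decide
  mul_assoc := by decide
  one_mul := by decide
  mul_one := by decide
  left_distrib := by decide
  right_distrib := by decide
  zero_mul := by decide
  mul_zero := by decide
  mul_comm := by decide
  neg_add_cancel := by decide
  nsmul := nsmulRec
  zsmul := zsmulRec

instance : Field F8 where
  exists_pair_ne := ⟨0, 1, by decide⟩
  mul_inv_cancel := by decide
  inv_zero := by decide
  nnqsmul := _
  qsmul := _

instance : CharP F8 2 := by
  have h := CharP.ringChar_of_prime_eq_zero (R := F8) Nat.prime_two (by decide)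
  have := ringChar.charP F8
  rwa [h] at this

theorem neg_eq (a : F8) : -a = a := rfl

end F8

open Matrix
open scoped MatrixGroups

set_option maxRecDepth 8000

/-! ## Computations in `SL(2, F8)` -/

abbrev M2 := Matrix (Fin 2) (Fin 2) F8

abbrev SL8 := Matrix.SpecialLinearGroup (Fin 2) F8

namespace SL8comp

/-- Explicit `2×2` determinant. -/
def d2 (m : M2) : F8 := m 0 0 * m 1 1 - m 0 1 * m 1 0

theorem det_eq (m : M2) : m.det = d2 m := Matrix.det_fin_two m

def e (n : Nat) (h : n < 8 := by norm_num) : F8 := ⟨n, h⟩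

def D (a b : F8) : M2 := !![a, 0; 0, b]

/-- A diagonal element of order `7`. -/
def X0 : M2 := D (e 2) (e 5)

/-- Explicit inverse (adjugate) of a determinant-one `2×2` matrix in characteristic two. -/
def hinv (m : M2) : M2 := !![m 1 1, m 0 1; m 1 0, m 0 0]

theorem coe_inv_eq (g : SL8) : ((g⁻¹ : SL8) : M2) = hinv (g : M2) := by
  rw [Matrix.SpecialLinearGroup.coe_inv, Matrix.adjugate_fin_two]
  simp only [F8.neg_eq, hinv]

/-- The elements of the cyclic group generated by `X0`. -/
def pcond (c : M2) : Prop :=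
  c = D 1 1 ∨ c = D (e 2) (e 5) ∨ c = D (e 4) (e 7) ∨ c = D (e 3) (e 6) ∨
    c = D (e 6) (e 3) ∨ c = D (e 7) (e 4) ∨ c = D (e 5) (e 2)

instance : DecidablePred pcond := fun c => by unfold pcond; exact inferInstance

instance fact7 : Fact (Nat.Prime 7) := ⟨by norm_num⟩

open Pointwise in
/-- Pointwise action of `MulAut` on subgroups is `map`. -/
theorem conj_smul_eq_map {G : Type*} [Group G] (a : MulAut G) (H : Subgroup G) :
    a • H = H.map a.toMonoidHom := by
  ext x
  rw [Subgroup.mem_pointwise_smul_iff_inv_smul_mem]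
  constructor
  · intro h
    exact ⟨a⁻¹ • x, h, by simp [MulAut.smul_def]⟩
  · rintro ⟨y, hy, rfl⟩
    simpa [MulAut.smul_def] using hy

theorem factorization_fact {n : ℕ} (h1 : 7 ∣ n) (h2 : ¬ (49 ∣ n)) (h0 : n ≠ 0) :
    n.factorization 7 = 1 := by
  have hp : Nat.Prime 7 := by norm_num
  have ha : 1 ≤ n.factorization 7 :=
    (Nat.Prime.pow_dvd_iff_le_factorization hp h0).mp (by simpa using h1)
  have hb : ¬ 2 ≤ n.factorization 7 := fun h =>
    h2 (by simpa using (Nat.Prime.pow_dvd_iff_le_factorization hp h0).mpr h)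
  omega

theorem factorization_504' : Nat.factorization 504 7 = 1 :=
  factorization_fact (by norm_num) (by norm_num) (by norm_num)

theorem factorization_42' : Nat.factorization 42 7 = 1 :=
  factorization_fact (by norm_num) (by norm_num) (by norm_num)

def T504 : Finset M2 := Finset.univ.filter (fun m => d2 m = 1)
def T7 : Finset M2 := Finset.univ.filter (fun m => d2 m = 1 ∧ m ^ 7 = 1)
def T63 : Finset M2 := Finset.univ.filter (fun m => d2 m = 1 ∧ ((m ^ 7) ^ 3) ^ 3 = 1)
def TN : Finset M2 := Finset.univ.filter (fun h => d2 h = 1 ∧ pcond (h * X0 * hinv h))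

set_option maxRecDepth 100000 in
set_option maxHeartbeats 4000000 in
theorem T504_card : T504.card = 504 := by decide

set_option maxRecDepth 100000 in
set_option maxHeartbeats 4000000 in
theorem T7_card : T7.card = 217 := by decide

set_option maxRecDepth 100000 in
set_option maxHeartbeats 8000000 in
theorem T63_card : T63.card = 441 := by decide

set_option maxRecDepth 100000 in
set_option maxHeartbeats 4000000 in
theorem TN_card : TN.card = 14 := by decide

/-! ## Basic structure constants of `SL8` -/

theorem card_SL8 : Nat.card SL8 = 504 := by
  have eqv : SL8 ≃ ↥T504 :=
    { toFun := fun g => ⟨(g : M2), by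
        simp only [T504, Finset.mem_filter, Finset.mem_univ, true_and, ← det_eq]
        exact g.2⟩
      invFun := fun m => ⟨m.1, by
        have := m.2
        simp only [T504, Finset.mem_filter, Finset.mem_univ, true_and, ← det_eq] at this
        exact this⟩
      left_inv := fun g => Subtype.ext rfl
      right_inv := fun m => Subtype.ext rfl }
  rw [Nat.card_congr eqv, Nat.card_eq_finsetCard, T504_card]

def x0 : SL8 := ⟨X0, by rw [det_eq]; decide⟩

theorem x0_pow_coe (k : ℕ) : ((x0 ^ k : SL8) : M2) = X0 ^ k :=
  Matrix.SpecialLinearGroup.coe_pow x0 k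

theorem x0_order : orderOf x0 = 7 := by
  have h7 : x0 ^ 7 = 1 := by
    apply Subtype.ext
    rw [x0_pow_coe]
    decide
  have h1 : x0 ≠ 1 := by
    intro h
    have : (x0 : M2) = ((1 : SL8) : M2) := congrArg _ h
    rw [Matrix.SpecialLinearGroup.coe_one] at this
    exact absurd this (by decide)
  exact orderOf_eq_prime h7 h1

/-- The fixed Sylow 7-subgroup. -/
def P0 : Subgroup SL8 := Subgroup.zpowers x0

theorem card_P0 : Nat.card P0 = 7 := by rw [P0, Nat.card_zpowers, x0_order]

theorem mem_P0_iff (z : SL8) : z ∈ P0 ↔ pcond (z : M2) := by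
  constructor
  · rintro hz
    obtain ⟨n, rfl⟩ := Subgroup.mem_zpowers_iff.mp hz
    have h0 : 0 ≤ n % 7 := Int.emod_nonneg n (by norm_num)
    have h7 : n % 7 < 7 := Int.emod_lt_of_pos n (by norm_num)
    have hconv : x0 ^ n = x0 ^ ((n % 7).toNat) := by
      rw [← zpow_natCast, Int.toNat_of_nonneg h0]
      conv_lhs => rw [← zpow_mod_orderOf, x0_order]
      norm_cast
    rw [hconv]
    have hk : (n % 7).toNat < 7 := by omega
    set k := (n % 7).toNat with hkdef
    clear_value k
    show pcond ((x0 ^ k : SL8) : M2)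
    rw [x0_pow_coe]
    interval_cases k <;> decide
  · intro hp
    have key : ∀ k : ℕ, (z : M2) = X0 ^ k → z ∈ P0 := by
      intro k hk
      have : z = x0 ^ k := Subtype.ext (by rw [x0_pow_coe, hk])
      rw [this]
      exact Subgroup.pow_mem _ (Subgroup.mem_zpowers x0) k
    rcases hp with h | h | h | h | h | h | h
    · exact key 0 (by rw [h]; decide)
    · exact key 1 (by rw [h]; decide)
    · exact key 2 (by rw [h]; decide)
    · exact key 3 (by rw [h]; decide)
    · exact key 4 (by rw [h]; decide)
    · exact key 5 (by rw [h]; decide)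
    · exact key 6 (by rw [h]; decide)

/-- If conjugation by `h` maps `H` onto itself then `h` normalizes `H`. -/
theorem mem_normalizer_of_map_conj {G : Type*} [Group G] {H : Subgroup G} {h : G}
    (hm : H.map (MulAut.conj h).toMonoidHom = H) : h ∈ Subgroup.normalizer (H : Set G) := by
  rw [Subgroup.mem_normalizer_iff]
  intro g
  constructor
  · intro hg
    have : (MulAut.conj h).toMonoidHom g ∈ H.map (MulAut.conj h).toMonoidHom :=
      Subgroup.mem_map_of_mem _ hg
    rw [hm] at this
    simpa [MulAut.conj_apply] using this
  · intro hg
    rw [← hm] at hg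
    obtain ⟨g', hg', hgg⟩ := hg
    have : g' = g := by
      apply (MulAut.conj h).injective
      simpa [MulAut.conj_apply] using hgg
    rwa [← this]

theorem mem_normalizer_P0_iff (h : SL8) :
    h ∈ Subgroup.normalizer (P0 : Set SL8) ↔ pcond ((h : M2) * X0 * hinv (h : M2)) := by
  have hcoe : ((h * x0 * h⁻¹ : SL8) : M2) = (h : M2) * X0 * hinv (h : M2) := by
    rw [Matrix.SpecialLinearGroup.coe_mul, Matrix.SpecialLinearGroup.coe_mul, coe_inv_eq]
    rfl
  constructor
  · intro hn
    have hx0 : x0 ∈ P0 := Subgroup.mem_zpowers x0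
    have := (Subgroup.mem_normalizer_iff.mp hn x0).mp hx0
    rw [mem_P0_iff] at this
    rwa [hcoe] at this
  · intro hp
    have hc : h * x0 * h⁻¹ ∈ P0 := by rw [mem_P0_iff, hcoe]; exact hp
    have horder : orderOf (h * x0 * h⁻¹) = 7 := by
      have : SemiconjBy h x0 (h * x0 * h⁻¹) := by
        unfold SemiconjBy; group
      rw [← this.orderOf_eq, x0_order]
    have hle : Subgroup.zpowers (h * x0 * h⁻¹) ≤ P0 := Subgroup.zpowers_le.mpr hc
    have hcards : Nat.card P0 ≤ Nat.card (Subgroup.zpowers (h * x0 * h⁻¹)) := by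
      rw [Nat.card_zpowers, horder, card_P0]
    have heq : Subgroup.zpowers (h * x0 * h⁻¹) = P0 :=
      Subgroup.eq_of_le_of_card_ge hle hcards
    apply mem_normalizer_of_map_conj
    rw [show P0 = Subgroup.zpowers x0 from rfl, MonoidHom.map_zpowers]
    have : (MulAut.conj h).toMonoidHom x0 = h * x0 * h⁻¹ := rfl
    rw [this]
    exact heq

theorem card_normalizer_P0 : Nat.card (Subgroup.normalizer (P0 : Set SL8)) = 14 := by
  have eqv : ↥(Subgroup.normalizer (P0 : Set SL8)) ≃ ↥TN :=
    { toFun := fun g => ⟨((g : SL8) : M2), by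
        simp only [TN, Finset.mem_filter, Finset.mem_univ, true_and]
        refine ⟨by rw [← det_eq]; exact (g : SL8).2, ?_⟩
        exact (mem_normalizer_P0_iff _).mp g.2⟩
      invFun := fun m => by
        refine ⟨⟨m.1, ?_⟩, ?_⟩
        · have := m.2
          simp only [TN, Finset.mem_filter, Finset.mem_univ, true_and] at this
          rw [det_eq]; exact this.1
        · have := m.2
          simp only [TN, Finset.mem_filter, Finset.mem_univ, true_and] at this
          exact (mem_normalizer_P0_iff _).mpr this.2
      left_inv := fun g => Subtype.ext (Subtype.ext rfl)
      right_inv := fun m => Subtype.ext rfl }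
  rw [Nat.card_congr eqv, Nat.card_eq_finsetCard, TN_card]

theorem factorization_504 : (Nat.card SL8).factorization 7 = 1 := by
  rw [card_SL8]; exact factorization_504'

/-- Every subgroup of order `7` has normalizer of order `14`. -/
theorem card_normalizer_of_card7 (Q : Subgroup SL8) (hQ : Nat.card Q = 7) :
    Nat.card (Subgroup.normalizer (Q : Set SL8)) = 14 := by
  have hP0card : Nat.card P0 = 7 ^ (Nat.card SL8).factorization 7 := by
    rw [factorization_504, pow_one, card_P0]
  have hQcard : Nat.card Q = 7 ^ (Nat.card SL8).factorization 7 := by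
    rw [factorization_504, pow_one, hQ]
  let Ps : Sylow 7 SL8 := Sylow.ofCard P0 hP0card
  let Qs : Sylow 7 SL8 := Sylow.ofCard Q hQcard
  obtain ⟨g, hg⟩ := MulAction.exists_smul_eq SL8 Ps Qs
  have hmap : P0.map (MulAut.conj g).toMonoidHom = Q := by
    have h := congrArg (fun P : Sylow 7 SL8 => (P : Subgroup SL8)) hg
    simp only [Sylow.coe_subgroup_smul] at h
    rw [conj_smul_eq_map] at h
    exact h
  rw [← hmap, ← Subgroup.map_equiv_normalizer_eq P0 (MulAut.conj g)]
  rw [← Nat.card_congr (Subgroup.equivMapOfInjective (Subgroup.normalizer (P0 : Set SL8))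
    (MulAut.conj g).toMonoidHom (MulAut.conj g).injective).toEquiv]
  exact card_normalizer_P0

/-! ## No subgroup of order 42 -/

theorem no_order_42 (K : Subgroup SL8) (hK : Nat.card K = 42) : False := by
  haveI : Fintype K := Fintype.ofFinite _
  have hcardK : Fintype.card K = 42 := by rw [← Nat.card_eq_fintype_card, hK]
  obtain ⟨y, hy⟩ := exists_prime_orderOf_dvd_card (G := K) 7 (by rw [hcardK]; norm_num)
  -- the Sylow 7-subgroup of K generated by y
  have hyK : Nat.card (Subgroup.zpowers y) = 7 ^ (Nat.card K).factorization 7 := by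
    rw [hK, Nat.card_zpowers, hy, factorization_42', pow_one]
  let PK : Sylow 7 K := Sylow.ofCard (Subgroup.zpowers y) hyK
  -- number of Sylow 7-subgroups of K is 1
  have hsub : Subsingleton (Sylow 7 K) := by
    have hmod := card_sylow_modEq_one 7 K
    have hdvd := Sylow.card_dvd_index PK
    have hidx : (PK : Subgroup K).index = 6 := by
      have h1 := Subgroup.card_mul_index (PK : Subgroup K)
      rw [Sylow.coe_ofCard] at h1 ⊢
      rw [hyK, hK, factorization_42', pow_one] at h1
      omega
    rw [hidx] at hdvd
    have hle : Nat.card (Sylow 7 K) ≤ 6 := Nat.le_of_dvd (by norm_num) hdvd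
    have hpos : 0 < Nat.card (Sylow 7 K) := Nat.card_pos
    have hmod' : Nat.card (Sylow 7 K) % 7 = 1 := hmod
    have h1 : Nat.card (Sylow 7 K) = 1 := by omega
    exact Nat.card_eq_one_iff_unique.mp h1 |>.1
  -- K normalizes the image Q of zpowers y in SL8
  let x : SL8 := (y : SL8)
  have hx_ord : orderOf x = 7 := by
    rw [← hy]
    exact orderOf_injective K.subtype Subtype.coe_injective y
  have hQ : (Subgroup.zpowers y).map K.subtype = Subgroup.zpowers x :=
    MonoidHom.map_zpowers K.subtype y
  have hKle : K ≤ Subgroup.normalizer ((Subgroup.zpowers x : Subgroup SL8) : Set SL8) := by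
    intro k hk
    let s : K := ⟨k, hk⟩
    have hsmul : s • PK = PK := Subsingleton.elim _ _
    have hmapK : (Subgroup.zpowers y).map (MulAut.conj s).toMonoidHom = Subgroup.zpowers y := by
      have h := congrArg (fun P : Sylow 7 K => (P : Subgroup K)) hsmul
      simp only [Sylow.coe_subgroup_smul] at h
      rw [conj_smul_eq_map, Sylow.coe_ofCard] at h
      exact h
    apply mem_normalizer_of_map_conj
    rw [MonoidHom.map_zpowers]
    have h1 : (MulAut.conj k).toMonoidHom x = k * x * k⁻¹ := rfl
    rw [h1]
    have h2 : Subgroup.zpowers (s * y * s⁻¹) = Subgroup.zpowers y := by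
      rw [MonoidHom.map_zpowers] at hmapK
      have hsy : (MulAut.conj s).toMonoidHom y = s * y * s⁻¹ := rfl
      rwa [hsy] at hmapK
    -- push h2 through K.subtype
    have h3 := congrArg (Subgroup.map K.subtype) h2
    rw [MonoidHom.map_zpowers, MonoidHom.map_zpowers] at h3
    have h4 : (K.subtype) (s * y * s⁻¹) = k * x * k⁻¹ := rfl
    rw [h4] at h3
    exact h3
  have hnorm : Nat.card (Subgroup.normalizer ((Subgroup.zpowers x : Subgroup SL8) : Set SL8)) = 14 :=
    card_normalizer_of_card7 _ (by rw [Nat.card_zpowers, hx_ord])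
  have hdvd : Nat.card K ∣ Nat.card (Subgroup.normalizer ((Subgroup.zpowers x : Subgroup SL8) : Set SL8)) :=
    Subgroup.card_dvd_of_le hKle
  rw [hK, hnorm] at hdvd
  norm_num at hdvd

/-! ## No subgroup of order 84, 126, 168 or 252 -/

theorem no_mid (K : Subgroup SL8)
    (hc : Nat.card K = 84 ∨ Nat.card K = 126 ∨ Nat.card K = 168 ∨ Nat.card K = 252) :
    False := by
  classical
  set φ := MulAction.toPermHom SL8 (SL8 ⧸ K) with hφ
  set N := φ.ker with hN
  have hNK : N ≤ K := by
    rw [hN, hφ, ← Subgroup.normalCore_eq_ker]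
    exact K.normalCore_le
  haveI hNnormal : N.Normal := MonoidHom.normal_ker φ
  have hKidx : Nat.card K * K.index = 504 := by rw [Subgroup.card_mul_index, card_SL8]
  have hQcard : Nat.card (SL8 ⧸ K) = K.index := (Subgroup.index_eq_card K).symm
  haveI : Fintype (SL8 ⧸ K) := Fintype.ofFinite _
  have hrange : Nat.card φ.range ∣ Nat.factorial K.index := by
    have h1 : Nat.card φ.range ∣ Nat.card (Equiv.Perm (SL8 ⧸ K)) :=
      Subgroup.card_subgroup_dvd_card _
    have h2 : Nat.card (Equiv.Perm (SL8 ⧸ K)) = Nat.factorial K.index := by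
      rw [Nat.card_eq_fintype_card, Fintype.card_perm, ← Nat.card_eq_fintype_card, hQcard]
    rwa [h2] at h1
  have hNidx : N.index = Nat.card φ.range := by
    rw [Subgroup.index_eq_card]
    exact Nat.card_congr (QuotientGroup.quotientKerEquivRange φ).toEquiv
  have hNcard : Nat.card N * N.index = 504 := by rw [Subgroup.card_mul_index, card_SL8]
  have h7N : 7 ∣ Nat.card N := by
    have hKpos : 0 < Nat.card K := Nat.card_pos
    have hKi : K.index ≤ 6 := by rcases hc with h | h | h | h <;> rw [h] at hKidx <;> omega
    have hfac : Nat.factorial K.index ∣ 720 := by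
      have h6 : Nat.factorial K.index ∣ Nat.factorial 6 := Nat.factorial_dvd_factorial hKi
      simpa [Nat.factorial] using h6
    have h7r : ¬ (7 ∣ N.index) := by
      intro h
      have h720 : (7 : ℕ) ∣ 720 := h.trans ((hNidx ▸ hrange).trans hfac)
      norm_num at h720
    have hdvd : (7 : ℕ) ∣ Nat.card N * N.index := by rw [hNcard]; norm_num
    rcases (Nat.Prime.dvd_mul (by norm_num)).mp hdvd with h | h
    · exact h
    · exact absurd h h7r
  haveI : Fintype N := Fintype.ofFinite _
  obtain ⟨y0, hy0⟩ := exists_prime_orderOf_dvd_card (G := N) 7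
    (by rwa [← Nat.card_eq_fintype_card])
  set y : SL8 := (y0 : SL8) with hydef
  have hyord : orderOf y = 7 := by
    rw [← hy0]; exact orderOf_injective N.subtype Subtype.coe_injective y0
  have hyN : y ∈ N := y0.2
  have hyc : Nat.card (Subgroup.zpowers y) = 7 ^ (Nat.card SL8).factorization 7 := by
    rw [factorization_504, pow_one, Nat.card_zpowers, hyord]
  have hall7 : ∀ z : SL8, z ^ 7 = 1 → z ∈ N := by
    intro z hz
    rcases eq_or_ne z 1 with rfl | hz1
    · exact N.one_mem
    have hzord : orderOf z = 7 := orderOf_eq_prime hz hz1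
    have hzc : Nat.card (Subgroup.zpowers z) = 7 ^ (Nat.card SL8).factorization 7 := by
      rw [factorization_504, pow_one, Nat.card_zpowers, hzord]
    obtain ⟨g, hg⟩ := MulAction.exists_smul_eq SL8
      (Sylow.ofCard (Subgroup.zpowers y) hyc) (Sylow.ofCard (Subgroup.zpowers z) hzc)
    have hmap : (Subgroup.zpowers y).map (MulAut.conj g).toMonoidHom = Subgroup.zpowers z := by
      have h := congrArg (fun P : Sylow 7 SL8 => (P : Subgroup SL8)) hg
      simp only [Sylow.coe_subgroup_smul, Sylow.coe_ofCard] at h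
      rw [conj_smul_eq_map] at h
      exact h
    have hz_mem : z ∈ (Subgroup.zpowers y).map (MulAut.conj g).toMonoidHom := by
      rw [hmap]; exact Subgroup.mem_zpowers z
    obtain ⟨w, hw, hwz⟩ := hz_mem
    have hwN : w ∈ N := Subgroup.zpowers_le.mpr hyN hw
    have hc : (MulAut.conj g).toMonoidHom w = g * w * g⁻¹ := rfl
    rw [hc] at hwz
    rw [← hwz]
    exact hNnormal.conj_mem w hwN g
  -- the 217 elements of `T7` all lie in `N`
  have h217 : (217 : ℕ) ≤ Nat.card N := by
    have hf : ∀ m : ↥T7, ∃ n : N, ((n : SL8) : M2) = m.1 := by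
      intro m
      have hm := m.2
      simp only [T7, Finset.mem_filter, Finset.mem_univ, true_and] at hm
      refine ⟨⟨⟨m.1, by rw [det_eq]; exact hm.1⟩, hall7 _ ?_⟩, rfl⟩
      apply Subtype.ext
      exact (Matrix.SpecialLinearGroup.coe_pow _ _).trans hm.2
    choose f hfspec using hf
    have hfinj : Function.Injective f := by
      intro a b hab
      apply Subtype.ext
      rw [← hfspec a, ← hfspec b, hab]
    calc (217 : ℕ) = Nat.card ↥T7 := by rw [Nat.card_eq_finsetCard, T7_card]
    _ ≤ Nat.card N := Nat.card_le_card_of_injective f hfinj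
  have hNdvd : Nat.card N ∣ 504 := card_SL8 ▸ Subgroup.card_subgroup_dvd_card N
  have hNleK : Nat.card N ≤ Nat.card K :=
    Nat.le_of_dvd Nat.card_pos (Subgroup.card_dvd_of_le hNK)
  have hKle : Nat.card K ≤ 252 := by rcases hc with h | h | h | h <;> omega
  have hNle : Nat.card N ≤ 252 := le_trans hNleK hKle
  have hN252 : Nat.card N = 252 := by
    interval_cases h : (Nat.card N) <;> revert hNdvd <;> decide
  have hNidx2 : N.index = 2 := by rw [hN252] at hNcard; omega
  have hsq : ∀ g : SL8, g ^ 2 ∈ N := by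
    intro g
    have hc2 : Nat.card (SL8 ⧸ N) = 2 := by rw [← Subgroup.index_eq_card, hNidx2]
    have h1 : ((QuotientGroup.mk' N) g) ^ Nat.card (SL8 ⧸ N) = 1 := pow_card_eq_one'
    rw [hc2, ← map_pow] at h1
    exact (QuotientGroup.eq_one_iff _).mp h1
  have hall63 : ∀ z : SL8, ((z ^ 7) ^ 3) ^ 3 = 1 → z ∈ N := by
    intro z hz
    have hz63 : z ^ 63 = 1 := by
      rw [← pow_mul, ← pow_mul] at hz
      norm_num at hz
      exact hz
    have hzz : z = (z ^ 32) ^ 2 := by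
      rw [← pow_mul]
      norm_num
      conv_rhs => rw [show (64 : ℕ) = 63 + 1 from rfl, pow_succ, hz63, one_mul]
    rw [hzz]
    exact hsq (z ^ 32)
  have h441 : (441 : ℕ) ≤ Nat.card N := by
    have hf : ∀ m : ↥T63, ∃ n : N, ((n : SL8) : M2) = m.1 := by
      intro m
      have hm := m.2
      simp only [T63, Finset.mem_filter, Finset.mem_univ, true_and] at hm
      refine ⟨⟨⟨m.1, by rw [det_eq]; exact hm.1⟩, hall63 _ ?_⟩, rfl⟩
      apply Subtype.ext
      simp only [Matrix.SpecialLinearGroup.coe_pow]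
      exact hm.2
    choose f hfspec using hf
    have hfinj : Function.Injective f := by
      intro a b hab
      apply Subtype.ext
      rw [← hfspec a, ← hfspec b, hab]
    calc (441 : ℕ) = Nat.card ↥T63 := by rw [Nat.card_eq_finsetCard, T63_card]
    _ ≤ Nat.card N := Nat.card_le_card_of_injective f hfinj
  omega

/-! ## The main theorem for `SL8` -/

theorem main_SL8 (K : Subgroup SL8)
    (h2 : 2 ∣ Nat.card K) (h3 : 3 ∣ Nat.card K) (h7 : 7 ∣ Nat.card K) : K = ⊤ := by
  have h6 : 6 ∣ Nat.card K := Nat.Coprime.mul_dvd_of_dvd_of_dvd (by norm_num) h2 h3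
  have h42 : 42 ∣ Nat.card K := Nat.Coprime.mul_dvd_of_dvd_of_dvd (by norm_num) h6 h7
  have hdvd : Nat.card K ∣ 504 := card_SL8 ▸ Subgroup.card_subgroup_dvd_card K
  obtain ⟨d, hd⟩ := h42
  have hd12 : d ∣ 12 := by
    have h' : 42 * d ∣ 42 * 12 := by
      rw [← hd]
      exact (by norm_num : (504 : ℕ) = 42 * 12) ▸ hdvd
    exact (mul_dvd_mul_iff_left (by norm_num : (42 : ℕ) ≠ 0)).mp h'
  have hdle : d ≤ 12 := Nat.le_of_dvd (by norm_num) hd12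
  have hdpos : 0 < d := by
    rcases Nat.eq_zero_or_pos d with rfl | h
    · rw [mul_zero] at hd
      exact absurd hd Nat.card_pos.ne'
    · exact h
  have hcases : d = 1 ∨ d = 2 ∨ d = 3 ∨ d = 4 ∨ d = 6 ∨ d = 12 := by
    interval_cases d <;> revert hd12 <;> decide
  rcases hcases with rfl | rfl | rfl | rfl | rfl | rfl
  · exact absurd (no_order_42 K (by omega)) not_false
  · exact absurd (no_mid K (Or.inl (by omega))) not_false
  · exact absurd (no_mid K (Or.inr (Or.inl (by omega)))) not_false
  · exact absurd (no_mid K (Or.inr (Or.inr (Or.inl (by omega))))) not_false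
  · exact absurd (no_mid K (Or.inr (Or.inr (Or.inr (by omega))))) not_false
  · exact Subgroup.eq_top_of_card_eq K (by rw [card_SL8]; omega)

end SL8comp

/-! ## Transfer to `PSL(2, GaloisField 2 3)` -/

section Transfer

open SL8comp

theorem center_SL2_GF8_eq_bot :
    Subgroup.center (Matrix.SpecialLinearGroup (Fin 2) (GaloisField 2 3)) = ⊥ := by
  rw [eq_bot_iff]
  intro A hA
  obtain ⟨r, hr1, hr2⟩ := Matrix.SpecialLinearGroup.mem_center_iff.mp hA
  rw [Fintype.card_fin] at hr1
  have hr : r = 1 := by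
    have hfac : (r - 1) * (r + 1) = 0 := by linear_combination hr1
    rcases mul_eq_zero.mp hfac with h | h
    · exact sub_eq_zero.mp h
    · have h1 : r = -1 := eq_neg_of_add_eq_zero_left h
      rw [h1]
      exact CharTwo.neg_eq 1
  rw [hr] at hr2
  rw [Subgroup.mem_bot]
  apply Subtype.ext
  rw [← hr2, Matrix.SpecialLinearGroup.coe_one]
  simp

noncomputable def gfE : GaloisField 2 3 ≃+* F8 := by
  letI : Algebra (ZMod 2) F8 := ZMod.algebra _ _
  exact ((GaloisField.algEquivGaloisField 2 3 (K := F8)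
    (by rw [Nat.card_eq_fintype_card]; rfl)).symm).toRingEquiv

/-- A ring equivalence induces an equivalence of special linear groups. -/
noncomputable def slMapEquiv :
    Matrix.SpecialLinearGroup (Fin 2) (GaloisField 2 3) ≃* SL8 where
  toFun := Matrix.SpecialLinearGroup.map (gfE : GaloisField 2 3 →+* F8)
  invFun := Matrix.SpecialLinearGroup.map (gfE.symm : F8 →+* GaloisField 2 3)
  left_inv g := by
    apply Subtype.ext
    ext i j
    exact gfE.symm_apply_apply _
  right_inv g := by
    apply Subtype.ext
    ext i j
    exact gfE.apply_symm_apply _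
  map_mul' := map_mul _

noncomputable def pslEquiv : PSL(2, GaloisField 2 3) ≃* SL8 :=
  (QuotientGroup.quotientMulEquivOfEq center_SL2_GF8_eq_bot).trans
    (QuotientGroup.quotientBot.trans slMapEquiv)

end Transfer

open scoped MatrixGroups

/-- `PSL(2,8)` has no proper subgroup of order divisible by each of `2`, `3` and `7`. -/
theorem PSL28_no_proper_subgroup_div_2_3_7
    (K : Subgroup PSL(2, GaloisField 2 3))
    (h2 : 2 ∣ Nat.card K) (h3 : 3 ∣ Nat.card K) (h7 : 7 ∣ Nat.card K) :
    K = ⊤ := by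
  let e := pslEquiv
  have hcard : Nat.card (K.map e.toMonoidHom) = Nat.card K :=
    (Nat.card_congr (Subgroup.equivMapOfInjective K e.toMonoidHom e.injective).toEquiv).symm
  have htop : K.map e.toMonoidHom = ⊤ :=
    SL8comp.main_SL8 _ (hcard ▸ h2) (hcard ▸ h3) (hcard ▸ h7)
  have hcomap := congrArg (Subgroup.comap e.toMonoidHom) htop
  rwa [Subgroup.comap_map_eq_self_of_injective e.injective, Subgroup.comap_top] at hcomap
end
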